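/- Let A be a Hopf algebra over a field k. If φ : A → A is a Hopf algebra automorphism (a bijective bialgebra homomorphism) and f : A → k is a unital k-algebra homomorphism, then φ⁻¹ ∘ ρ_f ∘ φ = ρ_{f∘φ}. Consequently the image of the conjugation map ρ is a normal subgroup of the group of Hopf algebra automorphisms of A. -/

import Mathlib

open TensorProduct

/-- The convolution product of two linear maps from a coalgebra to an algebra. -/
noncomputable def conv {k C B : Type*} [CommRing k]
    [AddCommGroup C] [Module k C] [Coalgebra k C]
    [Ring B] [Algebra k B] (f g : C →ₗ[k] B) : C →ₗ[k] B :=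
  LinearMap.mul' k B ∘ₗ TensorProduct.map f g ∘ₗ Coalgebra.comul

/-- For a linear functional `f : A → k` on a Hopf algebra, the conjugation map
`ρ_f(x) = Σ f(x₁) x₂ f(S(x₃))`. -/
noncomputable def rho {k A : Type*} [CommRing k] [Ring A] [HopfAlgebra k A]
    (f : A →ₗ[k] k) : A →ₗ[k] A :=
  conv (conv (Algebra.linearMap k A ∘ₗ f) LinearMap.id)
    (Algebra.linearMap k A ∘ₗ f ∘ₗ (HopfAlgebra.antipode k : A →ₗ[k] A))

section ConvLemmas

variable {k C B : Type*} [CommRing k]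
    [AddCommGroup C] [Module k C] [Coalgebra k C]
    [Ring B] [Algebra k B]

lemma conv_assoc (f g h : C →ₗ[k] B) : conv (conv f g) h = conv f (conv g h) := by
  have mulAssoc :
      LinearMap.mul' k B ∘ₗ (LinearMap.mul' k B).rTensor B =
        (LinearMap.mul' k B ∘ₗ (LinearMap.mul' k B).lTensor B) ∘ₗ
          (TensorProduct.assoc k B B B).toLinearMap := by
    apply TensorProduct.ext_threefold
    intro x y z
    simp [mul_assoc]
  unfold conv
  rw [← LinearMap.rTensor_comp_map, ← LinearMap.map_comp_rTensor,
      ← LinearMap.lTensor_comp_map, ← LinearMap.map_comp_lTensor]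
  ext a
  simp only [LinearMap.comp_apply]
  rw [← Coalgebra.coassoc_apply, TensorProduct.map_map_assoc]
  simpa using LinearMap.congr_fun mulAssoc
    (TensorProduct.map (TensorProduct.map f g) h
      ((Coalgebra.comul (R := k) (A := C)).rTensor C (Coalgebra.comul a)))

lemma conv_counit_right (f : C →ₗ[k] B) :
    conv f (Algebra.linearMap k B ∘ₗ Coalgebra.counit) = f := by
  ext a
  simp only [conv, LinearMap.comp_apply]
  rw [← LinearMap.map_comp_lTensor, LinearMap.comp_apply,
    Coalgebra.lTensor_counit_comul]
  simp

lemma conv_counit_left (f : C →ₗ[k] B) :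
    conv (Algebra.linearMap k B ∘ₗ Coalgebra.counit) f = f := by
  ext a
  simp only [conv, LinearMap.comp_apply]
  rw [← LinearMap.map_comp_rTensor, LinearMap.comp_apply,
    Coalgebra.rTensor_counit_comul]
  simp

end ConvLemmas

section Hopf

variable {k A : Type*} [CommRing k] [Ring A] [HopfAlgebra k A]

lemma conv_antipode_id :
    conv (HopfAlgebra.antipode (R := k) (A := A)) LinearMap.id
      = Algebra.linearMap k A ∘ₗ Coalgebra.counit := by
  unfold conv
  rw [show TensorProduct.map (HopfAlgebra.antipode (R := k) (A := A)) LinearMap.id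
      = (HopfAlgebra.antipode (R := k) (A := A)).rTensor A from rfl]
  exact HopfAlgebra.mul_antipode_rTensor_comul

lemma conv_id_antipode :
    conv LinearMap.id (HopfAlgebra.antipode (R := k) (A := A))
      = Algebra.linearMap k A ∘ₗ Coalgebra.counit := by
  unfold conv
  rw [show TensorProduct.map LinearMap.id (HopfAlgebra.antipode (R := k) (A := A))
      = (HopfAlgebra.antipode (R := k) (A := A)).lTensor A from rfl]
  exact HopfAlgebra.mul_antipode_lTensor_comul

variable (φ : A ≃ₐc[k] A)

lemma phi_comul :
    TensorProduct.map φ.toLinearMap φ.toLinearMap ∘ₗ Coalgebra.comul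
      = Coalgebra.comul ∘ₗ φ.toLinearMap :=
  CoalgHomClass.map_comp_comul φ

lemma phi_counit :
    (Coalgebra.counit (R := k) (A := A)) ∘ₗ φ.toLinearMap = Coalgebra.counit :=
  CoalgHomClass.counit_comp φ

lemma phi_mul :
    φ.toLinearMap ∘ₗ LinearMap.mul' k A
      = LinearMap.mul' k A ∘ₗ TensorProduct.map φ.toLinearMap φ.toLinearMap := by
  apply TensorProduct.ext'
  intro x y
  exact map_mul φ x y

lemma phi_unit :
    φ.toLinearMap ∘ₗ Algebra.linearMap k A = Algebra.linearMap k A := by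
  apply LinearMap.ext
  intro r
  exact AlgHomClass.commutes φ r

lemma conv_comp {B : Type*} [Ring B] [Algebra k B] (f g : A →ₗ[k] B) :
    conv f g ∘ₗ φ.toLinearMap
      = conv (f ∘ₗ φ.toLinearMap) (g ∘ₗ φ.toLinearMap) := by
  unfold conv
  simp only [LinearMap.comp_assoc]
  rw [← phi_comul φ,
    show TensorProduct.map f g ∘ₗ TensorProduct.map φ.toLinearMap φ.toLinearMap ∘ₗ
        Coalgebra.comul
      = (TensorProduct.map f g ∘ₗ TensorProduct.map φ.toLinearMap φ.toLinearMap) ∘ₗ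
        Coalgebra.comul from rfl,
    ← TensorProduct.map_comp]

lemma comp_conv {C : Type*} [AddCommGroup C] [Module k C] [Coalgebra k C]
    (f g : C →ₗ[k] A) :
    φ.toLinearMap ∘ₗ conv f g
      = conv (φ.toLinearMap ∘ₗ f) (φ.toLinearMap ∘ₗ g) := by
  unfold conv
  rw [← LinearMap.comp_assoc, ← LinearMap.comp_assoc, phi_mul φ]
  simp only [LinearMap.comp_assoc]
  rw [show TensorProduct.map φ.toLinearMap φ.toLinearMap ∘ₗ TensorProduct.map f g ∘ₗ
        Coalgebra.comul
      = (TensorProduct.map φ.toLinearMap φ.toLinearMap ∘ₗ TensorProduct.map f g) ∘ₗ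
        Coalgebra.comul from rfl,
    ← TensorProduct.map_comp]

lemma phi_antipode :
    φ.toLinearMap ∘ₗ HopfAlgebra.antipode (R := k)
      = (HopfAlgebra.antipode (R := k)) ∘ₗ φ.toLinearMap := by
  set L := φ.toLinearMap
  set S := HopfAlgebra.antipode (R := k) (A := A)
  have h1 : conv (S ∘ₗ L) L = Algebra.linearMap k A ∘ₗ Coalgebra.counit := by
    have := conv_comp φ S LinearMap.id
    rw [conv_antipode_id, LinearMap.id_comp] at this
    rw [← this, LinearMap.comp_assoc, phi_counit φ]
  have h2 : conv L (L ∘ₗ S) = Algebra.linearMap k A ∘ₗ Coalgebra.counit := by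
    have := comp_conv φ LinearMap.id S
    rw [conv_id_antipode, LinearMap.comp_id] at this
    rw [← this, ← LinearMap.comp_assoc, phi_unit φ]
  calc L ∘ₗ S = conv (Algebra.linearMap k A ∘ₗ Coalgebra.counit) (L ∘ₗ S) :=
        (conv_counit_left _).symm
    _ = conv (conv (S ∘ₗ L) L) (L ∘ₗ S) := by rw [h1]
    _ = conv (S ∘ₗ L) (conv L (L ∘ₗ S)) := conv_assoc _ _ _
    _ = conv (S ∘ₗ L) (Algebra.linearMap k A ∘ₗ Coalgebra.counit) := by rw [h2]
    _ = S ∘ₗ L := conv_counit_right _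

lemma rho_comp_key (f : A →ₗ[k] k) :
    rho f ∘ₗ φ.toLinearMap = φ.toLinearMap ∘ₗ rho (f ∘ₗ φ.toLinearMap) := by
  set L := φ.toLinearMap
  set S := HopfAlgebra.antipode (R := k) (A := A)
  set u := Algebra.linearMap k A
  unfold rho
  rw [conv_comp φ, conv_comp φ, comp_conv φ, comp_conv φ]
  congr 1
  · congr 1
    · simp only [LinearMap.comp_assoc]
      rw [show L ∘ₗ u ∘ₗ f ∘ₗ L = (L ∘ₗ u) ∘ₗ f ∘ₗ L from rfl, phi_unit φ]
  · simp only [LinearMap.comp_assoc]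
    rw [show L ∘ₗ u ∘ₗ f ∘ₗ L ∘ₗ S = (L ∘ₗ u) ∘ₗ f ∘ₗ L ∘ₗ S from rfl, phi_unit φ,
      phi_antipode φ]

end Hopf

/-- If `φ : A → A` is a Hopf algebra automorphism (a bijective bialgebra homomorphism) and
`f : A → k` is a unital algebra homomorphism, then `φ⁻¹ ∘ ρ_f ∘ φ = ρ_{f∘φ}`.  Consequently
the image of `ρ` is closed under conjugation by Hopf algebra automorphisms, i.e. it is a
normal subgroup of the group of Hopf algebra automorphisms of `A`. -/
theorem rho_conj {k A : Type*} [Field k] [Ring A] [HopfAlgebra k A]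
    (φ : A ≃ₐc[k] A) (f : A →ₐ[k] k) :
    (φ.symm.toLinearMap ∘ₗ rho f.toLinearMap ∘ₗ φ.toLinearMap
        = rho (f.toLinearMap ∘ₗ φ.toLinearMap)) ∧
    (∃ g : A →ₐ[k] k,
      φ.symm.toLinearMap ∘ₗ rho f.toLinearMap ∘ₗ φ.toLinearMap = rho g.toLinearMap) := by
  have hsymm : φ.symm.toLinearMap ∘ₗ φ.toLinearMap = LinearMap.id := by
    apply LinearMap.ext; intro a
    exact φ.symm_apply_apply a
  have key : φ.symm.toLinearMap ∘ₗ rho f.toLinearMap ∘ₗ φ.toLinearMap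
      = rho (f.toLinearMap ∘ₗ φ.toLinearMap) := by
    rw [show rho f.toLinearMap ∘ₗ φ.toLinearMap
        = (rho f.toLinearMap) ∘ₗ φ.toLinearMap from rfl]
    rw [rho_comp_key φ f.toLinearMap, ← LinearMap.comp_assoc, hsymm,
      LinearMap.id_comp]
  refine ⟨key, ⟨f.comp φ.toAlgEquiv.toAlgHom, ?_⟩⟩
  rw [key]
  rfl
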